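/- Let Q be a finite quiver without sources. The projective Leavitt complex P•, with its left A = kQ/J²-module structure and right B = L_k(Q^op)-module structure, satisfies δ^{l+ε}(x ζ_{(p,q)} · b) = δ^l(x ζ_{(p,q)}) · b for every homogeneous generator b ∈ {e_j, β^op, (β^op)*} of degree ε ∈ {0, 1, −1}; hence P• is a dg A-B-bimodule, where B is graded by path length with trivial differential and A is concentrated in degree zero. -/

import Mathlib

noncomputable section

/-- A finite quiver: finite sets of vertices and arrows, with source and target maps. -/
structure FQ where
  V : Type
  E : Type
  [fV : Fintype V]
  [fE : Fintype E]
  [dV : DecidableEq V]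
  [dE : DecidableEq E]
  s : E → V
  t : E → V

attribute [instance] FQ.fV FQ.fE FQ.dV FQ.dE

/-- `Q` has no sources: every vertex admits an arrow terminating at it. -/
def FQ.NoSources (Q : FQ) : Prop := ∀ i : Q.V, ∃ e : Q.E, Q.t e = i

/-- The opposite quiver. -/
def FQ.op (Q : FQ) : FQ := { V := Q.V, E := Q.E, s := Q.t, t := Q.s }

/-- Paths in the quiver `Q` from a vertex to a vertex; `cons p e he` is the path
`e ∘ p` obtained by composing an arrow `e` after the path `p` (paths are written
from right to left). -/
inductive QP (Q : FQ) : Q.V → Q.V → Type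
  | nil (i : Q.V) : QP Q i i
  | cons {i j : Q.V} (p : QP Q i j) (e : Q.E) (he : Q.s e = j) : QP Q i (Q.t e)

namespace QP

variable {Q : FQ}

/-- The length of a path. -/
def length : ∀ {i j : Q.V}, QP Q i j → ℕ
  | _, _, .nil _ => 0
  | _, _, .cons p _ _ => length p + 1

/-- The first (rightmost) arrow of a path, if any. -/
def firstArrow : ∀ {i j : Q.V}, QP Q i j → Option Q.E
  | _, _, .nil _ => none
  | _, _, .cons p e _ => some ((firstArrow p).getD e)

/-- The last (leftmost) arrow of a path, if any. -/
def lastArrow : ∀ {i j : Q.V}, QP Q i j → Option Q.E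
  | _, _, .nil _ => none
  | _, _, .cons _ e _ => some e

/-- Transport of a path along an equality of its starting vertices. -/
def castSrc {i i' j : Q.V} (h : i = i') (p : QP Q i j) : QP Q i' j := h ▸ p

/-- Extend a path at its starting vertex by an arrow (`p ↦ p ∘ e`). -/
def preCons (e : Q.E) : ∀ {j : Q.V}, QP Q (Q.t e) j → QP Q (Q.s e) j
  | _, .nil _ => .cons (.nil (Q.s e)) e rfl
  | _, .cons p f hf => .cons (preCons e p) f hf

lemma length_castSrc {i i' j : Q.V} (h : i = i') (p : QP Q i j) :
    (castSrc h p).length = p.length := by subst h; rfl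

lemma length_preCons (e : Q.E) : ∀ {j : Q.V} (p : QP Q (Q.t e) j),
    (preCons e p).length = p.length + 1
  | _, .nil _ => by simp [preCons, length]
  | _, .cons p f hf => by
      show (QP.cons (preCons e p) f hf).length = _
      simp [length, length_preCons e p]

end QP

/-- With respect to a choice `asc` of an *associated* arrow terminating at each
non-source vertex, `IsAssoc Q asc a` says that the arrow `a` is the associated arrow
terminating at its target. -/
def IsAssoc (Q : FQ) (asc : ∀ i : Q.V, (∃ e, Q.t e = i) → Q.E) (a : Q.E) : Prop :=
  asc (Q.t a) ⟨a, rfl⟩ = a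

/-- `(p, q)` is an *associated pair*: the paths `p` and `q` start at the same vertex,
and either one of them is trivial, or their first arrows differ, or their common first
arrow is not associated. -/
def AssocPair (Q : FQ) (asc : ∀ i : Q.V, (∃ e, Q.t e = i) → Q.E)
    {i j j' : Q.V} (p : QP Q i j) (q : QP Q i j') : Prop :=
  ∀ a : Q.E, p.firstArrow = some a → q.firstArrow = some a → ¬ IsAssoc Q asc a

lemma assocPair_nil_left {Q : FQ} {asc : ∀ i : Q.V, (∃ e, Q.t e = i) → Q.E}
    {i j : Q.V} (q : QP Q i j) : AssocPair Q asc (QP.nil i) q := by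
  intro a h
  simp [QP.firstArrow] at h

lemma assocPair_nil_right {Q : FQ} {asc : ∀ i : Q.V, (∃ e, Q.t e = i) → Q.E}
    {i j : Q.V} (p : QP Q i j) : AssocPair Q asc p (QP.nil i) := by
  intro a _ h
  simp [QP.firstArrow] at h

/-- The index set `Λ^l_i` (for `i = x.i`): associated pairs `(p, q)` with
`t(p) = i` and `l(q) - l(p) = l`. -/
structure Lam (Q : FQ) (asc : ∀ i : Q.V, (∃ e, Q.t e = i) → Q.E) (l : ℤ) where
  a : Q.V              -- the common starting vertex of `p` and `q`
  i : Q.V              -- the terminating vertex of `p`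
  b : Q.V              -- the terminating vertex of `q`
  p : QP Q a i
  q : QP Q a b
  ok : AssocPair Q asc p q
  deg : (q.length : ℤ) - (p.length : ℤ) = l

instance {Q : FQ} {asc : ∀ i : Q.V, (∃ e, Q.t e = i) → Q.E} {l : ℤ} :
    DecidableEq (Lam Q asc l) := Classical.decEq _
/-- Generators of the path algebra `kQ`. -/
inductive AGen (Q : FQ)
  | vtx (i : Q.V)
  | ar (e : Q.E)

/-- The defining relations of the radical square zero algebra `A = kQ/J²`:
the trivial paths are orthogonal idempotents summing to the unit, arrows are unital
with respect to the trivial paths at their endpoints, and any product of two arrows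
vanishes. -/
inductive ARel (k : Type) [Field k] (Q : FQ) :
    FreeAlgebra k (AGen Q) → FreeAlgebra k (AGen Q) → Prop
  | vtx_mul (i j : Q.V) :
      ARel k Q (FreeAlgebra.ι k (AGen.vtx i) * FreeAlgebra.ι k (AGen.vtx j))
        (if i = j then FreeAlgebra.ι k (AGen.vtx i) else 0)
  | sum_vtx : ARel k Q (∑ i : Q.V, FreeAlgebra.ι k (AGen.vtx i)) 1
  | vtx_ar (e : Q.E) :
      ARel k Q (FreeAlgebra.ι k (AGen.vtx (Q.t e)) * FreeAlgebra.ι k (AGen.ar e))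
        (FreeAlgebra.ι k (AGen.ar e))
  | ar_vtx (e : Q.E) :
      ARel k Q (FreeAlgebra.ι k (AGen.ar e) * FreeAlgebra.ι k (AGen.vtx (Q.s e)))
        (FreeAlgebra.ι k (AGen.ar e))
  | rad_sq (e f : Q.E) :
      ARel k Q (FreeAlgebra.ι k (AGen.ar e) * FreeAlgebra.ι k (AGen.ar f)) 0

/-- The radical square zero algebra `A = kQ/J²` of the finite quiver `Q`. -/
abbrev AlgA (k : Type) [Field k] (Q : FQ) := RingQuot (ARel k Q)

/-- The image `e_i` in `A` of the trivial path at the vertex `i`. -/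
def vtxA (k : Type) [Field k] (Q : FQ) (i : Q.V) : AlgA k Q :=
  RingQuot.mkAlgHom k (ARel k Q) (FreeAlgebra.ι k (AGen.vtx i))

/-- The image `α` in `A` of an arrow `α`. -/
def arA (k : Type) [Field k] (Q : FQ) (e : Q.E) : AlgA k Q :=
  RingQuot.mkAlgHom k (ARel k Q) (FreeAlgebra.ι k (AGen.ar e))

lemma arA_mul_vtxA (k : Type) [Field k] (Q : FQ) (e : Q.E) :
    arA k Q e * vtxA k Q (Q.s e) = arA k Q e := by
  have h := RingQuot.mkAlgHom_rel k (ARel.ar_vtx (k := k) (Q := Q) e)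
  simpa [vtxA, arA, map_mul] using h

/-- The indecomposable projective left `A`-module `P_i = A e_i`. -/
def Pmod (k : Type) [Field k] (Q : FQ) (i : Q.V) : Submodule (AlgA k Q) (AlgA k Q) :=
  Submodule.span (AlgA k Q) {vtxA k Q i}

lemma vtxA_mem (k : Type) [Field k] (Q : FQ) (i : Q.V) : vtxA k Q i ∈ Pmod k Q i :=
  Submodule.mem_span_singleton_self _

lemma arA_mem (k : Type) [Field k] (Q : FQ) (e : Q.E) {i : Q.V} (he : Q.s e = i) :
    arA k Q e ∈ Pmod k Q i := by
  subst he
  rw [← arA_mul_vtxA k Q e]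
  simpa [smul_eq_mul] using
    Submodule.smul_mem (Pmod k Q (Q.s e)) (arA k Q e) (vtxA_mem k Q (Q.s e))

/-- The `l`-th component `P^l = ⊕_{i ∈ Q₀} P_i^{(Λ^l_i)}` of the projective Leavitt
complex. -/
abbrev PL (k : Type) [Field k] (Q : FQ) (asc : ∀ i : Q.V, (∃ e, Q.t e = i) → Q.E)
    (l : ℤ) : Type :=
  Π₀ x : Lam Q asc l, ↥(Pmod k Q x.i)

instance PL.instAddCommGroup (k : Type) [Field k] (Q : FQ)
    (asc : ∀ i : Q.V, (∃ e, Q.t e = i) → Q.E) (l : ℤ) :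
    AddCommGroup (PL k Q asc l) :=
  @DFinsupp.addCommGroup (Lam Q asc l) (fun x => ↥(Pmod k Q x.i)) (fun _ => inferInstance)
/-- The basis element `e_i ζ_{(p,q)}` of `P^l`, for `x = (p, q) ∈ Λ^l_i`. -/
def zE {k : Type} [Field k] {Q : FQ} {asc : ∀ i : Q.V, (∃ e, Q.t e = i) → Q.E}
    {l : ℤ} (x : Lam Q asc l) : PL k Q asc l :=
  DFinsupp.single x ⟨vtxA k Q x.i, vtxA_mem k Q x.i⟩

/-- The basis element `α ζ_{(p,q)}` of `P^l`, for `x = (p, q) ∈ Λ^l_i` and an arrow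
`α` with `s(α) = i`. -/
def zA {k : Type} [Field k] {Q : FQ} {asc : ∀ i : Q.V, (∃ e, Q.t e = i) → Q.E}
    {l : ℤ} (x : Lam Q asc l) (e : Q.E) (he : Q.s e = x.i) : PL k Q asc l :=
  DFinsupp.single x ⟨arA k Q e, arA_mem k Q e he⟩

/-- The family of `A`-linear maps `δ^l : P^l → P^{l+1}` is *the differential of the
projective Leavitt complex* when it satisfies the defining formulas:
`δ^l(α ζ_{(p,q)}) = 0`; `δ^l(e_i ζ_{(βp̂, q)}) = β ζ_{(p̂, q)}`; and
`δ^l(e_i ζ_{(e_i, q)}) = ∑_{β : t(β) = i} β ζ_{(e_{s(β)}, qβ)}`. -/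
def IsLeavittDiff (k : Type) [Field k] (Q : FQ)
    (asc : ∀ i : Q.V, (∃ e, Q.t e = i) → Q.E)
    (δ : ∀ l : ℤ, PL k Q asc l →ₗ[AlgA k Q] PL k Q asc (l + 1)) : Prop :=
  (∀ (l : ℤ) (x : Lam Q asc l) (e : Q.E) (he : Q.s e = x.i), δ l (zA x e he) = 0) ∧
  (∀ (l : ℤ) (a j b : Q.V) (p' : QP Q a j) (e : Q.E) (he : Q.s e = j) (q : QP Q a b)
      (ok : AssocPair Q asc (QP.cons p' e he) q)
      (dg : (q.length : ℤ) - ((QP.cons p' e he).length : ℤ) = l)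
      (ok' : AssocPair Q asc p' q)
      (dg' : (q.length : ℤ) - (p'.length : ℤ) = l + 1),
      δ l (zE ⟨a, Q.t e, b, QP.cons p' e he, q, ok, dg⟩) =
        zA (⟨a, j, b, p', q, ok', dg'⟩ : Lam Q asc (l + 1)) e he) ∧
  (∀ (l : ℤ) (a b : Q.V) (q : QP Q a b)
      (ok : AssocPair Q asc (QP.nil a) q)
      (dg : (q.length : ℤ) - ((QP.nil a).length : ℤ) = l),
      δ l (zE ⟨a, a, b, QP.nil a, q, ok, dg⟩) =
        ∑ e : {e : Q.E // Q.t e = a},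
          zA (⟨Q.s e.1, Q.s e.1, b, QP.nil (Q.s e.1),
                QP.preCons e.1 (QP.castSrc e.2.symm q),
                assocPair_nil_left _,
                by
                  simp only [QP.length_preCons, QP.length_castSrc, QP.length] at *
                  push_cast
                  omega⟩ : Lam Q asc (l + 1)) e.1 rfl)
/-- The total module `⊕_{l ∈ ℤ} P^l` underlying the projective Leavitt complex. -/
abbrev PT (k : Type) [Field k] (Q : FQ)
    (asc : ∀ i : Q.V, (∃ e, Q.t e = i) → Q.E) : Type :=
  Π₀ l : ℤ, PL k Q asc l

instance PT.instAddCommGroup (k : Type) [Field k] (Q : FQ)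
    (asc : ∀ i : Q.V, (∃ e, Q.t e = i) → Q.E) : AddCommGroup (PT k Q asc) :=
  @DFinsupp.addCommGroup ℤ (fun l => PL k Q asc l) (fun _ => inferInstance)

/-- The element `x ζ_{(p,q)}` of `⊕_{l} P^l` in degree `l`, for `(p,q) ∈ Λ^l_i` and
`x = u ∈ P_i`. -/
def emb {k : Type} [Field k] {Q : FQ} {asc : ∀ i : Q.V, (∃ e, Q.t e = i) → Q.E}
    (l : ℤ) (x : Lam Q asc l) (u : ↥(Pmod k Q x.i)) : PT k Q asc :=
  DFinsupp.single l (DFinsupp.single x u)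

/-- The defining formulas (4.2)–(4.4) for the right action of the generators of the
Leavitt path algebra `B = L_k(Q^op)` on the projective Leavitt complex:
`Tv j` is the action of `e_j`, `Ta α` the action of `α^op`, and `Ts α` the action of
`(α^op)*`.  Explicitly, on `x ζ_{(p,q)}`:
* `x ζ_{(p,q)} · e_j = δ_{j,t(q)} x ζ_{(p,q)}`;
* `x ζ_{(p,q)} · α^op = x ζ_{(p̃, e_{t(α)})} - ∑_{β ∈ T(α)} x ζ_{(p̃β, β)}` if
  `l(q) = 0`, `p = p̃α` and `α` is associated, and `δ_{s(α),t(q)} x ζ_{(p, αq)}`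
  otherwise;
* `x ζ_{(p,q)} · (α^op)* = δ_{α,α₁} x ζ_{(p, q̂)}` if `q = α₁ q̂`, and
  `δ_{s(p),t(α)} x ζ_{(pα, e_{s(α)})}` if `l(q) = 0`. -/
structure ActionFormulas (k : Type) [Field k] (Q : FQ)
    (asc : ∀ i : Q.V, (∃ e, Q.t e = i) → Q.E)
    (Tv : Q.V → PT k Q asc → PT k Q asc)
    (Ta Ts : Q.E → PT k Q asc → PT k Q asc) : Prop where
  fv : ∀ (j : Q.V) (l : ℤ) (x : Lam Q asc l) (u : ↥(Pmod k Q x.i)),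
    Tv j (emb l x u) = if x.b = j then emb l x u else 0
  fa_assoc : ∀ (α : Q.E) (_hα : IsAssoc Q asc α) (j : Q.V) (pt : QP Q (Q.t α) j)
    (ok : AssocPair Q asc (QP.preCons α pt) (QP.nil (Q.s α))) (l : ℤ)
    (dg : (((QP.nil (Q.s α)).length : ℤ)) - (((QP.preCons α pt).length : ℤ)) = l)
    (ok1 : AssocPair Q asc pt (QP.nil (Q.t α)))
    (dg1 : (((QP.nil (Q.t α)).length : ℤ)) - ((pt.length : ℤ)) = l + 1)
    (okb : ∀ b : {b : Q.E // Q.t b = Q.t α ∧ b ≠ α},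
      AssocPair Q asc (QP.preCons b.1 (QP.castSrc b.2.1.symm pt))
        (QP.cons (QP.nil (Q.s b.1)) b.1 rfl))
    (dgb : ∀ b : {b : Q.E // Q.t b = Q.t α ∧ b ≠ α},
      (((QP.cons (QP.nil (Q.s b.1)) b.1 rfl).length : ℤ)) -
        (((QP.preCons b.1 (QP.castSrc b.2.1.symm pt)).length : ℤ)) = l + 1)
    (u : ↥(Pmod k Q j)),
    Ta α (emb l ⟨Q.s α, j, Q.s α, QP.preCons α pt, QP.nil (Q.s α), ok, dg⟩ u) =
      emb (l + 1) ⟨Q.t α, j, Q.t α, pt, QP.nil (Q.t α), ok1, dg1⟩ u -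
      ∑ b : {b : Q.E // Q.t b = Q.t α ∧ b ≠ α},
        emb (l + 1) ⟨Q.s b.1, j, Q.t b.1, QP.preCons b.1 (QP.castSrc b.2.1.symm pt),
          QP.cons (QP.nil (Q.s b.1)) b.1 rfl, okb b, dgb b⟩ u
  fa_ext : ∀ (α : Q.E) (l : ℤ) (x : Lam Q asc l) (u : ↥(Pmod k Q x.i))
    (_hcond : ¬(x.q.length = 0 ∧ x.p.firstArrow = some α ∧ IsAssoc Q asc α))
    (h : Q.s α = x.b) (ok' : AssocPair Q asc x.p (QP.cons x.q α h))
    (dg' : (((QP.cons x.q α h).length : ℤ)) - ((x.p.length : ℤ)) = l + 1),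
    Ta α (emb l x u) = emb (l + 1) ⟨x.a, x.i, Q.t α, x.p, QP.cons x.q α h, ok', dg'⟩ u
  fa_zero : ∀ (α : Q.E) (l : ℤ) (x : Lam Q asc l) (u : ↥(Pmod k Q x.i))
    (_hcond : ¬(x.q.length = 0 ∧ x.p.firstArrow = some α ∧ IsAssoc Q asc α))
    (_h : Q.s α ≠ x.b), Ta α (emb l x u) = 0
  fs_top_eq : ∀ (α₁ : Q.E) (l : ℤ) (a i c : Q.V) (p : QP Q a i) (qh : QP Q a c)
    (he : Q.s α₁ = c)
    (ok : AssocPair Q asc p (QP.cons qh α₁ he))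
    (dg : (((QP.cons qh α₁ he).length : ℤ)) - ((p.length : ℤ)) = l)
    (ok' : AssocPair Q asc p qh)
    (dg' : ((qh.length : ℤ)) - ((p.length : ℤ)) = l - 1)
    (u : ↥(Pmod k Q i)),
    Ts α₁ (emb l ⟨a, i, Q.t α₁, p, QP.cons qh α₁ he, ok, dg⟩ u) =
      emb (l - 1) ⟨a, i, c, p, qh, ok', dg'⟩ u
  fs_top_ne : ∀ (α α₁ : Q.E), α ≠ α₁ → ∀ (l : ℤ) (a i c : Q.V) (p : QP Q a i)
    (qh : QP Q a c) (he : Q.s α₁ = c)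
    (ok : AssocPair Q asc p (QP.cons qh α₁ he))
    (dg : (((QP.cons qh α₁ he).length : ℤ)) - ((p.length : ℤ)) = l)
    (u : ↥(Pmod k Q i)),
    Ts α (emb l ⟨a, i, Q.t α₁, p, QP.cons qh α₁ he, ok, dg⟩ u) = 0
  fs_nil_eq : ∀ (α : Q.E) (l : ℤ) (i : Q.V) (p : QP Q (Q.t α) i)
    (ok : AssocPair Q asc p (QP.nil (Q.t α)))
    (dg : (((QP.nil (Q.t α)).length : ℤ)) - ((p.length : ℤ)) = l)
    (ok' : AssocPair Q asc (QP.preCons α p) (QP.nil (Q.s α)))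
    (dg' : (((QP.nil (Q.s α)).length : ℤ)) - (((QP.preCons α p).length : ℤ)) = l - 1)
    (u : ↥(Pmod k Q i)),
    Ts α (emb l ⟨Q.t α, i, Q.t α, p, QP.nil (Q.t α), ok, dg⟩ u) =
      emb (l - 1) ⟨Q.s α, i, Q.s α, QP.preCons α p, QP.nil (Q.s α), ok', dg'⟩ u
  fs_nil_ne : ∀ (α : Q.E) (l : ℤ) (x : Lam Q asc l) (u : ↥(Pmod k Q x.i)),
    x.q.length = 0 → Q.t α ≠ x.a → Ts α (emb l x u) = 0

/-- The element of `Λ⁰_i` given by the pair `(e_i, e_i)` of trivial paths. -/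
def nilLam {Q : FQ} {asc : ∀ i : Q.V, (∃ e, Q.t e = i) → Q.E} (v : Q.V) :
    Lam Q asc 0 :=
  ⟨v, v, v, QP.nil v, QP.nil v, assocPair_nil_left _, by simp [QP.length]⟩

/-! Both sides of each identity are `A`-linear, so it suffices to compare them on the generators
`e_i ζ_{(p,q)}`. The differential works at the end of `p` (removing its last arrow) or, for
trivial `p`, at the start of `q` (summing over the arrows `β` that can be prefixed to `q`). The
actions of `e_j`, `α^op`, `(α^op)*` look at `t(q)`, append `α` to `q`, remove the last arrow of
`q`, or, for trivial `q`, prefix `α` to `p`; operations at different ends of the paths commute.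
When both paths are trivial, `(α^op)*` keeps only the term `β = α` of the sum in `δ`. In the
exceptional case of `α^op` (`l(q) = 0`, `p = p̃α`, `α` associated) the correction sum over
`β ∈ T(α)` makes the two sides agree; for `p = α` it cancels the terms `β ≠ α` of `δ`. -/

theorem sum_subtype_eq_add_sum_subtype_ne {ι M : Type*} [Fintype ι] [DecidableEq ι]
    [AddCommMonoid M] (p : ι → Prop) [DecidablePred p] {a : ι} (ha : p a) (f : ι → M) :
    ∑ i : {i // p i}, f i = f a + ∑ i : {i // p i ∧ i ≠ a}, f i := by
  rw [Fintype.sum_eq_add_sum_subtype_ne (fun i : {i // p i} => f i) ⟨a, ha⟩]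
  congr 1
  exact Fintype.sum_equiv
    { toFun i := ⟨i.1.1, i.1.2, fun h => i.2 (Subtype.ext h)⟩
      invFun i := ⟨⟨i.1, i.2.1⟩, fun h => i.2.2 (congrArg Subtype.val h)⟩ } _ _ fun _ => rfl

section LeavittComplex

variable {k : Type} [Field k] {Q : FQ} {asc : ∀ i : Q.V, (∃ e, Q.t e = i) → Q.E}
  {a i b : Q.V}

namespace QP

theorem firstArrow_cons_of_eq_some {a j : Q.V} {p : QP Q a j} {β : Q.E}
    (hp : p.firstArrow = some β) (f : Q.E) (hf : Q.s f = j) :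
    (cons p f hf).firstArrow = some β := by
  simp [firstArrow, hp]

theorem firstArrow_preCons (e : Q.E) : ∀ {j : Q.V} (p : QP Q (Q.t e) j),
    (preCons e p).firstArrow = some e
  | _, .nil _ => by simp [preCons, firstArrow]
  | _, .cons p _ _ => firstArrow_cons_of_eq_some (firstArrow_preCons e p) _ _

theorem preCons_castSrc_cons (e : Q.E) {a j : Q.V} (h : Q.t e = a) (q : QP Q a j) (f : Q.E)
    (hf : Q.s f = j) :
    preCons e (castSrc h.symm (cons q f hf)) = cons (preCons e (castSrc h.symm q)) f hf := by
  subst h; rfl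

theorem exists_eq_castSrc_preCons : ∀ {a j : Q.V} (p : QP Q a j) {γ : Q.E},
    p.firstArrow = some γ →
      ∃ (h : Q.s γ = a) (pt : QP Q (Q.t γ) j), p = castSrc h (preCons γ pt)
  | _, _, .nil _, _, h => by simp [firstArrow] at h
  | _, _, .cons p f hf, γ, h => by
    cases hp : p.firstArrow with
    | none =>
      cases p with
      | nil =>
        obtain rfl : f = γ := by simpa [firstArrow] using h
        exact ⟨hf, nil _, by subst hf; rfl⟩
      | cons => simp [firstArrow] at hp
    | some β =>
      obtain rfl : β = γ := by simpa [firstArrow, hp] using h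
      obtain ⟨rfl, pt, rfl⟩ := exists_eq_castSrc_preCons p hp
      exact ⟨rfl, cons pt f hf, rfl⟩

end QP

theorem IsAssoc.eq_of_target_eq {β α : Q.E} (hβ : IsAssoc Q asc β) (hα : IsAssoc Q asc α)
    (h : Q.t β = Q.t α) : β = α := by
  unfold IsAssoc at hβ hα
  rw [← hβ, ← hα]
  congr 1

namespace AssocPair

theorem of_cons_left {a j b : Q.V} {p : QP Q a j} {e : Q.E} {he : Q.s e = j}
    {q : QP Q a b} (h : AssocPair Q asc (QP.cons p e he) q) : AssocPair Q asc p q :=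
  fun β hp hq => h β (QP.firstArrow_cons_of_eq_some hp e he) hq

theorem of_cons_right {p : QP Q a i} {q : QP Q a b} {e : Q.E} {he : Q.s e = b}
    (h : AssocPair Q asc p (QP.cons q e he)) : AssocPair Q asc p q :=
  fun β hp hq => h β hp (QP.firstArrow_cons_of_eq_some hq e he)

theorem cons_right {p : QP Q a i} {q : QP Q a b} {α : Q.E} (ok : AssocPair Q asc p q)
    (hgen : ¬(q.length = 0 ∧ p.firstArrow = some α ∧ IsAssoc Q asc α)) (h : Q.s α = b) :
    AssocPair Q asc p (QP.cons q α h) := by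
  intro β hp hq hβ
  cases q with
  | nil =>
    obtain rfl : α = β := by simpa [QP.firstArrow] using hq
    exact hgen ⟨by simp [QP.length], hp, hβ⟩
  | cons q f hf => exact ok β hp (by simpa [QP.firstArrow] using hq) hβ

theorem of_firstArrow_not_isAssoc {p : QP Q a i} {q : QP Q a b} {β : Q.E}
    (hp : p.firstArrow = some β) (hβ : ¬ IsAssoc Q asc β) : AssocPair Q asc p q := by
  intro x hx _
  rw [hp, Option.some_inj] at hx
  exact hx ▸ hβ

end AssocPair

variable (k Q) in
def vtxP (i : Q.V) : ↥(Pmod k Q i) := ⟨vtxA k Q i, vtxA_mem k Q i⟩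

variable (k Q) in
def arP (e : Q.E) {i : Q.V} (he : Q.s e = i) : ↥(Pmod k Q i) := ⟨arA k Q e, arA_mem k Q e he⟩

/-- `u ζ_{(p,q)}` in its degree `l(q) - l(p)`: indexing the generators by the pair of paths
alone removes all degree bookkeeping from the computations. -/
def zeta (p : QP Q a i) (q : QP Q a b) (ok : AssocPair Q asc p q) (u : ↥(Pmod k Q i)) :
    PT k Q asc :=
  emb ((q.length : ℤ) - p.length) ⟨a, i, b, p, q, ok, rfl⟩ u

theorem emb_eq_zeta {l : ℤ} (x : Lam Q asc l) (u : ↥(Pmod k Q x.i)) :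
    emb l x u = zeta x.p x.q x.ok u := by
  obtain ⟨a, i, b, p, q, ok, rfl⟩ := x
  rfl

theorem zeta_congr_left {p p' : QP Q a i} (hp : p = p') (q : QP Q a b)
    (ok : AssocPair Q asc p q) (ok' : AssocPair Q asc p' q) (u : ↥(Pmod k Q i)) :
    zeta p q ok u = zeta p' q ok' u := by
  subst hp; rfl

theorem zeta_congr_right (p : QP Q a i) {q q' : QP Q a b} (hq : q = q')
    (ok : AssocPair Q asc p q) (ok' : AssocPair Q asc p q') (u : ↥(Pmod k Q i)) :
    zeta p q ok u = zeta p q' ok' u := by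
  subst hq; rfl

theorem zeta_preCons_castSrc_nil_right (e : Q.E) {c : Q.V} (h : Q.t e = c)
    (p : QP Q (Q.s e) i) (ok : AssocPair Q asc p (QP.preCons e (QP.castSrc h.symm (QP.nil c))))
    (ok' : AssocPair Q asc p (QP.cons (QP.nil (Q.s e)) e rfl)) (u : ↥(Pmod k Q i)) :
    zeta p (QP.preCons e (QP.castSrc h.symm (QP.nil c))) ok u
      = zeta p (QP.cons (QP.nil (Q.s e)) e rfl) ok' u := by
  subst h; rfl

theorem zeta_preCons_castSrc_nil_left (e : Q.E) {c : Q.V} (h : Q.t e = c)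
    (q : QP Q (Q.s e) b) (ok : AssocPair Q asc (QP.preCons e (QP.castSrc h.symm (QP.nil c))) q)
    (ok' : AssocPair Q asc (QP.cons (QP.nil (Q.s e)) e rfl) q) :
    zeta (QP.preCons e (QP.castSrc h.symm (QP.nil c))) q ok (vtxP k Q c)
      = zeta (QP.cons (QP.nil (Q.s e)) e rfl) q ok' (vtxP k Q (Q.t e)) := by
  subst h; rfl

theorem PT.linearMap_ext {M : Type*} [AddCommGroup M] [Module (AlgA k Q) M]
    {f g : PT k Q asc →ₗ[AlgA k Q] M}
    (h : ∀ {a i b : Q.V} (p : QP Q a i) (q : QP Q a b) (ok : AssocPair Q asc p q),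
      f (zeta p q ok (vtxP k Q i)) = g (zeta p q ok (vtxP k Q i))) : f = g := by
  refine DFinsupp.lhom_ext' fun l => DFinsupp.lhom_ext' fun x => LinearMap.ext fun u => ?_
  obtain ⟨c, hc⟩ := Submodule.mem_span_singleton.mp u.2
  have hu : u = c • vtxP k Q x.i := Subtype.ext hc.symm
  have hx := h x.p x.q x.ok
  rw [← emb_eq_zeta] at hx
  simp only [LinearMap.comp_apply, DFinsupp.lsingle_apply, hu]
  simpa only [emb, DFinsupp.single_smul, map_smul] using congrArg (c • ·) hx

namespace ActionFormulas

variable {Tv : Q.V → PT k Q asc → PT k Q asc} {Ta Ts : Q.E → PT k Q asc → PT k Q asc}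

theorem tv_zeta (hF : ActionFormulas k Q asc Tv Ta Ts) (j : Q.V) (p : QP Q a i)
    (q : QP Q a b) (ok : AssocPair Q asc p q) (u : ↥(Pmod k Q i)) :
    Tv j (zeta p q ok u) = if b = j then zeta p q ok u else 0 :=
  hF.fv j _ ⟨a, i, b, p, q, ok, rfl⟩ u

theorem ta_zeta_preCons_of_isAssoc (hF : ActionFormulas k Q asc Tv Ta Ts) {α : Q.E}
    (hα : IsAssoc Q asc α) (pt : QP Q (Q.t α) i)
    (ok : AssocPair Q asc (QP.preCons α pt) (QP.nil (Q.s α))) (u : ↥(Pmod k Q i)) :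
    Ta α (zeta (QP.preCons α pt) (QP.nil (Q.s α)) ok u)
      = zeta pt (QP.nil (Q.t α)) (assocPair_nil_right _) u
        - ∑ β : {β : Q.E // Q.t β = Q.t α ∧ β ≠ α},
            zeta (QP.preCons β.1 (QP.castSrc β.2.1.symm pt))
              (QP.cons (QP.nil (Q.s β.1)) β.1 rfl)
              (AssocPair.of_firstArrow_not_isAssoc (QP.firstArrow_preCons _ _)
                fun hβ => β.2.2 (hβ.eq_of_target_eq hα β.2.1)) u := by
  have h := hF.fa_assoc α hα i pt ok _ rfl (assocPair_nil_right _)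
    (by simp only [QP.length, QP.length_preCons]; push_cast; ring)
    (fun β => AssocPair.of_firstArrow_not_isAssoc (QP.firstArrow_preCons _ _)
      fun hβ => β.2.2 (hβ.eq_of_target_eq hα β.2.1))
    (fun β => by simp only [QP.length, QP.length_preCons, QP.length_castSrc]; push_cast; ring) u
  simpa only [emb_eq_zeta] using h

theorem ta_zeta_eq_cons (hF : ActionFormulas k Q asc Tv Ta Ts) {α : Q.E} (p : QP Q a i)
    (q : QP Q a b) (ok : AssocPair Q asc p q)
    (hgen : ¬(q.length = 0 ∧ p.firstArrow = some α ∧ IsAssoc Q asc α)) (h : Q.s α = b)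
    (u : ↥(Pmod k Q i)) :
    Ta α (zeta p q ok u) = zeta p (QP.cons q α h) (ok.cons_right hgen h) u :=
  (hF.fa_ext α _ ⟨a, i, b, p, q, ok, rfl⟩ u hgen h (ok.cons_right hgen h)
    (by simp only [QP.length]; push_cast; ring)).trans (emb_eq_zeta _ _)

theorem ta_zeta_eq_zero (hF : ActionFormulas k Q asc Tv Ta Ts) {α : Q.E} (p : QP Q a i)
    (q : QP Q a b) (ok : AssocPair Q asc p q)
    (hgen : ¬(q.length = 0 ∧ p.firstArrow = some α ∧ IsAssoc Q asc α)) (h : Q.s α ≠ b)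
    (u : ↥(Pmod k Q i)) : Ta α (zeta p q ok u) = 0 :=
  hF.fa_zero α _ ⟨a, i, b, p, q, ok, rfl⟩ u hgen h

theorem ts_zeta_cons (hF : ActionFormulas k Q asc Tv Ta Ts) {α : Q.E} (p : QP Q a i)
    (q : QP Q a b) (h : Q.s α = b) (ok : AssocPair Q asc p (QP.cons q α h))
    (u : ↥(Pmod k Q i)) :
    Ts α (zeta p (QP.cons q α h) ok u) = zeta p q ok.of_cons_right u :=
  (hF.fs_top_eq α _ a i b p q h ok rfl ok.of_cons_right
    (by simp only [QP.length]; push_cast; ring) u).trans (emb_eq_zeta _ _)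

theorem ts_zeta_cons_of_ne (hF : ActionFormulas k Q asc Tv Ta Ts) {α α₁ : Q.E}
    (hne : α ≠ α₁) (p : QP Q a i) (q : QP Q a b) (h : Q.s α₁ = b)
    (ok : AssocPair Q asc p (QP.cons q α₁ h)) (u : ↥(Pmod k Q i)) :
    Ts α (zeta p (QP.cons q α₁ h) ok u) = 0 :=
  hF.fs_top_ne α α₁ hne _ a i b p q h ok rfl u

theorem ts_zeta_nil (hF : ActionFormulas k Q asc Tv Ta Ts) {α : Q.E} (p : QP Q (Q.t α) i)
    (ok : AssocPair Q asc p (QP.nil (Q.t α))) (u : ↥(Pmod k Q i)) :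
    Ts α (zeta p (QP.nil (Q.t α)) ok u)
      = zeta (QP.preCons α p) (QP.nil (Q.s α)) (assocPair_nil_right _) u :=
  (hF.fs_nil_eq α _ i p ok rfl (assocPair_nil_right _)
    (by simp only [QP.length, QP.length_preCons]; push_cast; ring) u).trans (emb_eq_zeta _ _)

theorem ts_zeta_nil_of_ne (hF : ActionFormulas k Q asc Tv Ta Ts) {α : Q.E} (hα : Q.t α ≠ a)
    (p : QP Q a i) (ok : AssocPair Q asc p (QP.nil a)) (u : ↥(Pmod k Q i)) :
    Ts α (zeta p (QP.nil a) ok u) = 0 :=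
  hF.fs_nil_ne α _ ⟨a, i, a, p, QP.nil a, ok, rfl⟩ u (by simp [QP.length]) hα

end ActionFormulas

structure IsLeavittDiffOnGenerators (D : PT k Q asc → PT k Q asc) : Prop where
  zeta_cons : ∀ {a j b : Q.V} (p : QP Q a j) (e : Q.E) (he : Q.s e = j) (q : QP Q a b)
    (ok : AssocPair Q asc (QP.cons p e he) q),
    D (zeta (QP.cons p e he) q ok (vtxP k Q (Q.t e)))
      = zeta p q ok.of_cons_left (arP k Q e he)
  zeta_nil : ∀ {a b : Q.V} (q : QP Q a b) (ok : AssocPair Q asc (QP.nil a) q),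
    D (zeta (QP.nil a) q ok (vtxP k Q a))
      = ∑ e : {e : Q.E // Q.t e = a}, zeta (QP.nil (Q.s e.1))
          (QP.preCons e.1 (QP.castSrc e.2.symm q)) (assocPair_nil_left _) (arP k Q e.1 rfl)

theorem IsLeavittDiff.onGenerators
    {δ : ∀ l : ℤ, PL k Q asc l →ₗ[AlgA k Q] PL k Q asc (l + 1)} (hδ : IsLeavittDiff k Q asc δ)
    {D : PT k Q asc → PT k Q asc}
    (hD : ∀ (l : ℤ) (v : PL k Q asc l),
      D (DFinsupp.single l v) = DFinsupp.single (l + 1) (δ l v)) :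
    IsLeavittDiffOnGenerators D where
  zeta_cons p e he q ok := (hD _ (zE ⟨_, _, _, QP.cons p e he, q, ok, rfl⟩)).trans <| by
    rw [hδ.2.1 _ _ _ _ p e he q ok rfl ok.of_cons_left
      (by simp only [QP.length]; push_cast; ring)]
    exact emb_eq_zeta _ _
  zeta_nil q ok := (hD _ (zE ⟨_, _, _, QP.nil _, q, ok, rfl⟩)).trans <| by
    rw [hδ.2.2 _ _ _ q ok rfl, ← DFinsupp.singleAddHom_apply, map_sum]
    exact Finset.sum_congr rfl fun e _ => emb_eq_zeta _ _

variable {D : PT k Q asc →ₗ[AlgA k Q] PT k Q asc}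

theorem tv_comm_zeta (hD : IsLeavittDiffOnGenerators ⇑D)
    {Tv : Q.V → PT k Q asc →ₗ[AlgA k Q] PT k Q asc} {Ta Ts : Q.E → PT k Q asc → PT k Q asc}
    (hF : ActionFormulas k Q asc (fun j u => Tv j u) Ta Ts) (j : Q.V) (p : QP Q a i)
    (q : QP Q a b) (ok : AssocPair Q asc p q) :
    D (Tv j (zeta p q ok (vtxP k Q i))) = Tv j (D (zeta p q ok (vtxP k Q i))) := by
  rw [hF.tv_zeta]
  cases p with
  | nil =>
    rw [hD.zeta_nil, map_sum]
    simp only [hF.tv_zeta]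
    split_ifs <;> simp [hD.zeta_nil]
  | cons p e he =>
    rw [hD.zeta_cons, hF.tv_zeta]
    split_ifs <;> simp [hD.zeta_cons]

section Ts

variable {Tv : Q.V → PT k Q asc → PT k Q asc} {Ta : Q.E → PT k Q asc → PT k Q asc}
  {Ts : Q.E → PT k Q asc →ₗ[AlgA k Q] PT k Q asc}

theorem ts_comm_zeta_cons (hD : IsLeavittDiffOnGenerators ⇑D)
    (hF : ActionFormulas k Q asc Tv Ta (fun e u => Ts e u)) (α : Q.E) (p : QP Q a i)
    (q : QP Q a b) {α₁ : Q.E} (h : Q.s α₁ = b) (ok : AssocPair Q asc p (QP.cons q α₁ h)) :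
    D (Ts α (zeta p (QP.cons q α₁ h) ok (vtxP k Q i)))
      = Ts α (D (zeta p (QP.cons q α₁ h) ok (vtxP k Q i))) := by
  by_cases hα : α = α₁
  · subst hα
    rw [hF.ts_zeta_cons]
    cases p with
    | nil =>
      rw [hD.zeta_nil, hD.zeta_nil, map_sum]
      refine Finset.sum_congr rfl fun e _ => ?_
      rw [zeta_congr_right _ (QP.preCons_castSrc_cons e.1 e.2 q α h) _ (assocPair_nil_left _),
        hF.ts_zeta_cons]
    | cons p f hf => rw [hD.zeta_cons, hD.zeta_cons, hF.ts_zeta_cons]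
  · rw [hF.ts_zeta_cons_of_ne hα, map_zero]
    cases p with
    | nil =>
      rw [hD.zeta_nil, map_sum]
      refine (Finset.sum_eq_zero fun e _ => ?_).symm
      rw [zeta_congr_right _ (QP.preCons_castSrc_cons e.1 e.2 q α₁ h) _ (assocPair_nil_left _),
        hF.ts_zeta_cons_of_ne hα]
    | cons p f hf => rw [hD.zeta_cons, hF.ts_zeta_cons_of_ne hα]

theorem ts_comm_zeta_nil (hD : IsLeavittDiffOnGenerators ⇑D)
    (hF : ActionFormulas k Q asc Tv Ta (fun e u => Ts e u)) (α : Q.E) (p : QP Q a i)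
    (ok : AssocPair Q asc p (QP.nil a)) :
    D (Ts α (zeta p (QP.nil a) ok (vtxP k Q i)))
      = Ts α (D (zeta p (QP.nil a) ok (vtxP k Q i))) := by
  by_cases hα : Q.t α = a
  · subst hα
    rw [hF.ts_zeta_nil]
    cases p with
    | nil =>
      rw [hD.zeta_nil, map_sum, Fintype.sum_eq_single ⟨α, rfl⟩]
      · rw [zeta_preCons_castSrc_nil_right α rfl _ _ (assocPair_nil_left _), hF.ts_zeta_cons]
        exact hD.zeta_cons (QP.nil _) α rfl (QP.nil _) (assocPair_nil_right _)
      · intro e he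
        rw [zeta_preCons_castSrc_nil_right e.1 e.2 _ _ (assocPair_nil_left _),
          hF.ts_zeta_cons_of_ne fun h => he (Subtype.ext h.symm)]
    | cons p f hf =>
      rw [hD.zeta_cons, hF.ts_zeta_nil]
      exact hD.zeta_cons (QP.preCons α p) f hf (QP.nil _) (assocPair_nil_right _)
  · rw [hF.ts_zeta_nil_of_ne hα, map_zero]
    cases p with
    | nil =>
      rw [hD.zeta_nil, map_sum]
      refine (Finset.sum_eq_zero fun e _ => ?_).symm
      rw [zeta_preCons_castSrc_nil_right e.1 e.2 _ _ (assocPair_nil_left _),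
        hF.ts_zeta_cons_of_ne (by rintro rfl; exact hα e.2)]
    | cons p f hf => rw [hD.zeta_cons, hF.ts_zeta_nil_of_ne hα]

theorem ts_comm_zeta (hD : IsLeavittDiffOnGenerators ⇑D)
    (hF : ActionFormulas k Q asc Tv Ta (fun e u => Ts e u)) (α : Q.E) (p : QP Q a i)
    (q : QP Q a b) (ok : AssocPair Q asc p q) :
    D (Ts α (zeta p q ok (vtxP k Q i))) = Ts α (D (zeta p q ok (vtxP k Q i))) := by
  cases q with
  | nil => exact ts_comm_zeta_nil hD hF α p ok
  | cons q α₁ h => exact ts_comm_zeta_cons hD hF α p q h ok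

end Ts

section Ta

variable {Tv : Q.V → PT k Q asc → PT k Q asc} {Ts : Q.E → PT k Q asc → PT k Q asc}
  {Ta : Q.E → PT k Q asc →ₗ[AlgA k Q] PT k Q asc}

theorem ta_comm_zeta_of_not_exceptional (hD : IsLeavittDiffOnGenerators ⇑D)
    (hF : ActionFormulas k Q asc Tv (fun e u => Ta e u) Ts) {α : Q.E} (p : QP Q a i)
    (q : QP Q a b) (ok : AssocPair Q asc p q)
    (hgen : ¬(q.length = 0 ∧ p.firstArrow = some α ∧ IsAssoc Q asc α)) :
    D (Ta α (zeta p q ok (vtxP k Q i))) = Ta α (D (zeta p q ok (vtxP k Q i))) := by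
  by_cases hα : Q.s α = b
  · rw [hF.ta_zeta_eq_cons p q ok hgen hα]
    cases p with
    | nil =>
      rw [hD.zeta_nil, hD.zeta_nil, map_sum]
      refine Finset.sum_congr rfl fun e _ => ?_
      rw [hF.ta_zeta_eq_cons _ _ _ (by simp [QP.firstArrow]) hα]
      exact zeta_congr_right _ (QP.preCons_castSrc_cons e.1 e.2 q α hα) _ _ _
    | cons p f hf =>
      rw [hD.zeta_cons, hD.zeta_cons, hF.ta_zeta_eq_cons p q _
        (fun ⟨h1, h2, h3⟩ => hgen ⟨h1, QP.firstArrow_cons_of_eq_some h2 f hf, h3⟩) hα]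
  · rw [hF.ta_zeta_eq_zero p q ok hgen hα, map_zero]
    cases p with
    | nil =>
      rw [hD.zeta_nil, map_sum]
      exact (Finset.sum_eq_zero fun e _ =>
        hF.ta_zeta_eq_zero _ _ _ (by simp [QP.firstArrow]) hα _).symm
    | cons p f hf =>
      rw [hD.zeta_cons, hF.ta_zeta_eq_zero p q _
        (fun ⟨h1, h2, h3⟩ => hgen ⟨h1, QP.firstArrow_cons_of_eq_some h2 f hf, h3⟩) hα]

theorem ta_comm_zeta_preCons_of_isAssoc (hD : IsLeavittDiffOnGenerators ⇑D)
    (hF : ActionFormulas k Q asc Tv (fun e u => Ta e u) Ts) {α : Q.E} (hα : IsAssoc Q asc α)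
    (pt : QP Q (Q.t α) i) (ok : AssocPair Q asc (QP.preCons α pt) (QP.nil (Q.s α))) :
    D (Ta α (zeta (QP.preCons α pt) (QP.nil (Q.s α)) ok (vtxP k Q i)))
      = Ta α (D (zeta (QP.preCons α pt) (QP.nil (Q.s α)) ok (vtxP k Q i))) := by
  rw [hF.ta_zeta_preCons_of_isAssoc hα, map_sub, map_sum]
  cases pt with
  | nil =>
    -- `QP.preCons α pt` is a `QP.cons` only up to unfolding, hence `erw`.
    erw [hD.zeta_cons (QP.nil (Q.s α)) α rfl (QP.nil (Q.s α)) ok]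
    rw [hD.zeta_nil, hF.ta_zeta_eq_cons _ _ _ (by simp [QP.firstArrow]) rfl,
      Finset.sum_congr rfl fun e _ =>
        zeta_preCons_castSrc_nil_right e.1 e.2 _ _ (assocPair_nil_left _) _,
      Finset.sum_congr rfl fun β _ => congrArg D (zeta_preCons_castSrc_nil_left β.1 β.2.1 _ _
        (AssocPair.of_firstArrow_not_isAssoc (by simp [QP.firstArrow])
          fun h => β.2.2 (h.eq_of_target_eq hα β.2.1)))]
    simp only [hD.zeta_cons]
    rw [sum_subtype_eq_add_sum_subtype_ne (fun e => Q.t e = Q.t α) rfl fun e =>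
      zeta (QP.nil (Q.s e)) (QP.cons (QP.nil (Q.s e)) e rfl) (assocPair_nil_left _)
        (arP k Q e rfl), add_sub_cancel_right]
  | cons pt g hg =>
    erw [hD.zeta_cons (QP.preCons α pt) g hg (QP.nil (Q.s α)) ok]
    rw [hD.zeta_cons, hF.ta_zeta_preCons_of_isAssoc hα]
    congr 1
    refine Finset.sum_congr rfl fun β _ => ?_
    rw [zeta_congr_left (QP.preCons_castSrc_cons β.1 β.2.1 pt g hg) _ _
      (AssocPair.of_firstArrow_not_isAssoc (QP.firstArrow_cons_of_eq_some
        (QP.firstArrow_preCons _ _) g hg) fun h => β.2.2 (h.eq_of_target_eq hα β.2.1)),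
      hD.zeta_cons]

theorem ta_comm_zeta (hD : IsLeavittDiffOnGenerators ⇑D)
    (hF : ActionFormulas k Q asc Tv (fun e u => Ta e u) Ts) (α : Q.E) (p : QP Q a i)
    (q : QP Q a b) (ok : AssocPair Q asc p q) :
    D (Ta α (zeta p q ok (vtxP k Q i))) = Ta α (D (zeta p q ok (vtxP k Q i))) := by
  by_cases hgen : q.length = 0 ∧ p.firstArrow = some α ∧ IsAssoc Q asc α
  · obtain ⟨hq, hp, hα⟩ := hgen
    obtain ⟨rfl, pt, rfl⟩ := QP.exists_eq_castSrc_preCons p hp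
    cases q with
    | nil => exact ta_comm_zeta_preCons_of_isAssoc hD hF hα pt ok
    | cons => simp [QP.length] at hq
  · exact ta_comm_zeta_of_not_exceptional hD hF p q ok hgen

end Ta

end LeavittComplex

theorem projective_leavitt_complex_dg_bimodule_general (k : Type) [Field k]
    (Q : FQ)
    (asc : ∀ i : Q.V, (∃ e, Q.t e = i) → Q.E)
    (δ : ∀ l : ℤ, PL k Q asc l →ₗ[AlgA k Q] PL k Q asc (l + 1))
    (hδ : IsLeavittDiff k Q asc δ)
    (Tv : Q.V → PT k Q asc →ₗ[AlgA k Q] PT k Q asc)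
    (Ta Ts : Q.E → PT k Q asc →ₗ[AlgA k Q] PT k Q asc)
    (hF : ActionFormulas k Q asc (fun j u => Tv j u) (fun e u => Ta e u)
      (fun e u => Ts e u)) :
    ∀ δT : PT k Q asc →ₗ[AlgA k Q] PT k Q asc,
      (∀ (l : ℤ) (v : PL k Q asc l),
        δT (DFinsupp.single l v) = DFinsupp.single (l + 1) (δ l v)) →
      (∀ j : Q.V, δT.comp (Tv j) = (Tv j).comp δT) ∧
      (∀ e : Q.E, δT.comp (Ta e) = (Ta e).comp δT) ∧
      (∀ e : Q.E, δT.comp (Ts e) = (Ts e).comp δT) := by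
  intro δT hδT
  have hD := hδ.onGenerators hδT
  exact ⟨fun j => PT.linearMap_ext fun p q ok => tv_comm_zeta hD hF j p q ok,
    fun α => PT.linearMap_ext fun p q ok => ta_comm_zeta hD hF α p q ok,
    fun α => PT.linearMap_ext fun p q ok => ts_comm_zeta hD hF α p q ok⟩

/-- **The projective Leavitt complex is a dg `A`-`B`-bimodule (Proposition 4.6).**
Let `Q` be a finite quiver without sources, `A = kQ/J²`, and `B = L_k(Q^op)` (graded by
path degree, with trivial differential).  Suppose `Tv`, `Ta`, `Ts` are `A`-linear
operators on `⊕_l P^l` giving the right actions of the generators `e_j`, `β^op`,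
`(β^op)*` of `B` (homogeneous of degrees `0`, `1`, `-1` respectively) via the defining
formulas.  Then the total differential `δ` of the projective Leavitt complex commutes
with each of these actions, `δ(x ζ_{(p,q)} · b) = δ(x ζ_{(p,q)}) · b`; hence `P•` is a
dg `A`-`B`-bimodule. -/
theorem projective_leavitt_complex_dg_bimodule (k : Type) [Field k]
    (Q : FQ) (hQ : Q.NoSources)
    (asc : ∀ i : Q.V, (∃ e, Q.t e = i) → Q.E)
    (hasc : ∀ (i : Q.V) (h : ∃ e, Q.t e = i), Q.t (asc i h) = i)
    (δ : ∀ l : ℤ, PL k Q asc l →ₗ[AlgA k Q] PL k Q asc (l + 1))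
    (hδ : IsLeavittDiff k Q asc δ)
    (Tv : Q.V → PT k Q asc →ₗ[AlgA k Q] PT k Q asc)
    (Ta Ts : Q.E → PT k Q asc →ₗ[AlgA k Q] PT k Q asc)
    (hF : ActionFormulas k Q asc (fun j u => Tv j u) (fun e u => Ta e u)
      (fun e u => Ts e u)) :
    ∀ δT : PT k Q asc →ₗ[AlgA k Q] PT k Q asc,
      (∀ (l : ℤ) (v : PL k Q asc l),
        δT (DFinsupp.single l v) = DFinsupp.single (l + 1) (δ l v)) →
      (∀ j : Q.V, δT.comp (Tv j) = (Tv j).comp δT) ∧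
      (∀ e : Q.E, δT.comp (Ta e) = (Ta e).comp δT) ∧
      (∀ e : Q.E, δT.comp (Ts e) = (Ts e).comp δT) :=
  projective_leavitt_complex_dg_bimodule_general k Q asc δ hδ Tv Ta Ts hF
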